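/- For μ = 1, the consistency region of MSEIC is contained in that of AIC, which is contained in that of QAIC: if g_MSEIC(q,1) = 2 - (q-1)² > 0 and q ≥ 1 then g_AIC(q,1) = q(1 - log q) > 0, and if g_AIC(q,1) > 0 and q ≥ 1 then g_QAIC(q) = log q - q + 2 > 0. -/

import Mathlib

noncomputable def gAIC (q μ : ℝ) : ℝ := q * (1 - Real.log q) - 1 + 1 / μ
noncomputable def gQAIC (q : ℝ) : ℝ := Real.log q - q + 2
noncomputable def gMSEIC (q μ : ℝ) : ℝ := 2 - (q - 1) ^ 2 * μ

/-! For `μ = 1` the AIC criterion is `q (1 - log q)`, positive exactly for `q < e`.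
The MSEIC criterion forces `q < 1 + √2 < e`. Conversely, `q - log q` is increasing on
`[1, ∞)`, so on `[1, e]` the QAIC criterion is at least its value `3 - e > 0` at `e`. -/

open Real Set

lemma Real.sub_log_monotoneOn : MonotoneOn (fun x => x - log x) (Ici 1) := by
  intro x (hx : 1 ≤ x) y _ hxy
  have hx0 : 0 < x := by linarith
  have hy0 : 0 < y := by linarith
  have : log y - log x ≤ y - x :=
    calc log y - log x = log (y / x) := (log_div hy0.ne' hx0.ne').symm
      _ ≤ y / x - 1 := log_le_sub_one_of_pos (div_pos hy0 hx0)
      _ = (y - x) / x := by field_simp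
      _ ≤ y - x := div_le_self (by linarith) hx
  dsimp only
  linarith

lemma gAIC_one_pos_iff {q : ℝ} (hq : 0 < q) : 0 < gAIC q 1 ↔ q < exp 1 := by
  rw [← log_lt_iff_lt_exp hq, gAIC, div_one, sub_add_cancel]
  constructor
  · intro h
    linarith [pos_of_mul_pos_right h hq.le]
  · intro h
    exact mul_pos hq (by linarith)

lemma lt_exp_one_of_gMSEIC_one_pos {q : ℝ} (h : 0 < gMSEIC q 1) : q < exp 1 := by
  rw [gMSEIC, mul_one, sub_pos] at h
  nlinarith [exp_one_gt_d9]

lemma gQAIC_pos_of_le_exp_one {q : ℝ} (h1 : 1 ≤ q) (he : q ≤ exp 1) : 0 < gQAIC q := by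
  have hmono : q - log q ≤ exp 1 - log (exp 1) :=
    Real.sub_log_monotoneOn h1 (h1.trans he : 1 ≤ exp 1) he
  rw [log_exp] at hmono
  rw [gQAIC]
  linarith [exp_one_lt_d9]

theorem stmt_6 :
    (∀ q : ℝ, 1 ≤ q → 0 < gMSEIC q 1 → 0 < gAIC q 1) ∧
    (∀ q : ℝ, 1 ≤ q → 0 < gAIC q 1 → 0 < gQAIC q) := by
  constructor
  · intro q hq hMSEIC
    exact (gAIC_one_pos_iff (by linarith)).2 (lt_exp_one_of_gMSEIC_one_pos hMSEIC)
  · intro q hq hAIC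
    exact gQAIC_pos_of_le_exp_one hq ((gAIC_one_pos_iff (by linarith)).1 hAIC).le
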